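/- Let φ be the automorphism of F₄ = ⟨a,b,c,d⟩ with φ(a)=a, φ(b)=ba, φ(c)=ca², φ(d)=dc. Then for every p ≥ 2, the reduced word representing φᵖ(bd⁻¹) has the element b a^{-(p-2)} as a prefix; more precisely, φᵖ(bd⁻¹) = b a^{-(p-2)} · w_p where w_p ∈ F₄ has a reduced expression beginning with the letter c⁻¹. -/
import Mathlib


namespace Stmt6

abbrev F4 := FreeGroup (Fin 4)

def a : F4 := FreeGroup.of 0
def b : F4 := FreeGroup.of 1
def c : F4 := FreeGroup.of 2
def d : F4 := FreeGroup.of 3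

/-- φ(a)=a, φ(b)=ba, φ(c)=ca², φ(d)=dc -/
def φ : F4 →* F4 := FreeGroup.lift ![a, b * a, c * a ^ 2, d * c]

lemma φ_a : φ a = a := by simp [φ, a]
lemma φ_b : φ b = b * a := by simp [φ, b]
lemma φ_c : φ c = c * a ^ 2 := by simp [φ, c]
lemma φ_d : φ d = d * c := by simp [φ, d]

lemma iter_mul (p : ℕ) (x y : F4) : (⇑φ)^[p] (x * y) = (⇑φ)^[p] x * (⇑φ)^[p] y := by
  induction p with
  | zero => rfl
  | succ n ih => simp [Function.iterate_succ_apply', ih]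

lemma iter_inv (p : ℕ) (x : F4) : (⇑φ)^[p] x⁻¹ = ((⇑φ)^[p] x)⁻¹ := by
  induction p with
  | zero => rfl
  | succ n ih => simp [Function.iterate_succ_apply', ih]

lemma iter_a (p : ℕ) : (⇑φ)^[p] a = a := by
  induction p with
  | zero => rfl
  | succ n ih => rw [Function.iterate_succ_apply', ih, φ_a]

lemma iter_b (p : ℕ) : (⇑φ)^[p] b = b * a ^ p := by
  induction p with
  | zero => simp
  | succ n ih =>
    rw [Function.iterate_succ_apply', ih, map_mul, map_pow, φ_b, φ_a, mul_assoc, ← pow_succ']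

lemma iter_c (p : ℕ) : (⇑φ)^[p] c = c * a ^ (2 * p) := by
  induction p with
  | zero => simp
  | succ n ih =>
    rw [Function.iterate_succ_apply', ih, map_mul, map_pow, φ_c, φ_a, mul_assoc, ← pow_add,
      show 2 + 2 * n = 2 * (n + 1) from by ring]

/-- the tail of φᵖ(d): φᵖ(d) = d * m p -/
def m : ℕ → F4
  | 0 => 1
  | p + 1 => m p * (c * a ^ (2 * p))

lemma iter_d (p : ℕ) : (⇑φ)^[p] d = d * m p := by
  induction p with
  | zero => simp [m]
  | succ n ih =>
    rw [Function.iterate_succ_apply, φ_d, iter_mul, ih, iter_c, m, mul_assoc]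

/-- reduced word of (m p)⁻¹ * d⁻¹ -/
def M : ℕ → List (Fin 4 × Bool)
  | 0 => [((3 : Fin 4), false)]
  | p + 1 => List.replicate (2 * p) ((0 : Fin 4), false) ++ ((2 : Fin 4), false) :: M p

lemma M_false (p : ℕ) : ∀ x ∈ M p, x.2 = false := by
  induction p with
  | zero => intro x hx; simp [M] at hx; simp [hx]
  | succ n ih =>
    intro x hx
    simp only [M, List.mem_append, List.mem_cons, List.mem_replicate] at hx
    rcases hx with h | h | h
    · simp [h.2]
    · simp [h]
    · exact ih x h

lemma reduce_all_false (L : List (Fin 4 × Bool)) (h : ∀ x ∈ L, x.2 = false) :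
    FreeGroup.reduce L = L := by
  induction L with
  | nil => rfl
  | cons x xs ih =>
    have hx : x.2 = false := h x (.head _)
    have hxs := ih (fun y hy => h y (.tail _ hy))
    rw [FreeGroup.reduce.cons, hxs]
    cases xs with
    | nil => rfl
    | cons y ys =>
      have hy : y.2 = false := h y (.tail _ (.head _))
      simp [hx, hy]

lemma inv_of (i : Fin 4) : (FreeGroup.of i)⁻¹ = FreeGroup.mk [(i, false)] := by
  rw [FreeGroup.of, FreeGroup.inv_mk]; rfl

lemma mk_replicate (n : ℕ) (i : Fin 4) :
    FreeGroup.mk (List.replicate n (i, false)) = (FreeGroup.of i) ^ (-(n : ℤ)) := by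
  induction n with
  | zero => simp; rfl
  | succ k ih =>
    rw [List.replicate_succ, show ((i, false) :: List.replicate k (i, false)) =
      [(i, false)] ++ List.replicate k (i, false) from rfl, ← FreeGroup.mul_mk, ih, ← inv_of]
    push_cast
    group

lemma mk_M (p : ℕ) : FreeGroup.mk (M p) = (m p)⁻¹ * d⁻¹ := by
  induction p with
  | zero =>
    rw [M, m, show [((3 : Fin 4), false)] = M 0 from rfl, M, ← inv_of]
    simp [d]
  | succ n ih =>
    rw [M, m, ← FreeGroup.mul_mk, mk_replicate,
      show (((2 : Fin 4), false) :: M n) = [((2 : Fin 4), false)] ++ M n from rfl,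
      ← FreeGroup.mul_mk, ← inv_of, ih]
    have : (c * a ^ (2 * n))⁻¹ = (FreeGroup.of 0) ^ (-(2 * n : ℤ)) * (FreeGroup.of 2)⁻¹ := by
      rw [mul_inv_rev]
      simp [a, c, zpow_neg]
      rw [← zpow_natCast (FreeGroup.of 0) (2 * n)]
      push_cast
      ring_nf
    rw [mul_inv_rev (m n), this]
    push_cast
    group

/-- For p ≥ 2, φᵖ(bd⁻¹) = b a^{-(p-2)} · w_p where the reduced word of w_p starts
    with the letter c⁻¹ (so there is no cancellation at the junction). -/
theorem stmt_6 (p : ℕ) (hp : 2 ≤ p) :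
    ∃ w : F4, (⇑φ)^[p] (b * d⁻¹) = b * a ^ (-((p : ℤ) - 2)) * w ∧
      w.toWord.head? = some ((2 : Fin 4), false) := by
  obtain ⟨q, rfl⟩ : ∃ q, p = q + 1 := ⟨p - 1, by omega⟩
  refine ⟨FreeGroup.mk (((2 : Fin 4), false) :: M q), ?_, ?_⟩
  · rw [show (((2 : Fin 4), false) :: M q) = [((2 : Fin 4), false)] ++ M q from rfl,
      ← FreeGroup.mul_mk, ← inv_of, mk_M,
      show FreeGroup.of (2 : Fin 4) = c from rfl]
    have h1 : (⇑φ)^[q + 1] (b * d⁻¹) = b * a ^ (q + 1) * ((m (q + 1))⁻¹ * d⁻¹) := by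
      rw [iter_mul, iter_inv, iter_b, iter_d, mul_inv_rev, mul_assoc]
    rw [h1, m, mul_inv_rev, mul_inv_rev]
    have ha : a ^ (q + 1) * (a ^ (2 * q))⁻¹ = a ^ (-((q + 1 : ℤ) - 2)) := by
      rw [← zpow_natCast a (q + 1), ← zpow_natCast a (2 * q), ← zpow_sub]
      congr 1
      push_cast
      ring
    calc b * a ^ (q + 1) * ((a ^ (2 * q))⁻¹ * c⁻¹ * (m q)⁻¹ * d⁻¹)
        = b * (a ^ (q + 1) * (a ^ (2 * q))⁻¹) * (c⁻¹ * ((m q)⁻¹ * d⁻¹)) := by group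
      _ = b * a ^ (-((q + 1 : ℤ) - 2)) * (c⁻¹ * ((m q)⁻¹ * d⁻¹)) := by rw [ha]
      _ = _ := by push_cast; ring_nf
  · rw [FreeGroup.toWord_mk, reduce_all_false]
    · rfl
    · intro x hx
      cases hx with
      | head => rfl
      | tail _ h => exact M_false q x h

end Stmt6
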